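/- arXiv:2409.01858 — 3 statements merged into one kernel-verified Lean document; each statement's English description precedes it below -/
import Mathlib

section
/- Let Ω ⊂ ℝⁿ be a bounded open domain with C¹ boundary, and let u : Ω̄ → ℝ be C¹ on Ω̄ with ∂u/∂ν > 0 at every point of ∂Ω. Set m := inf_{∂Ω} ∂u/∂ν and assume m > 0. Then the open ball B_m(0) of radius m centered at the origin is contained in ∇u(Γ_u), i.e. for every z ∈ ℝⁿ with |z| < m there exists y ∈ Γ_u with ∇u(y) = z. -/
open MeasureTheory Metric
open scoped RealInnerProductSpace

noncomputable section

/-- `ν` is an outward unit normal vector field on the boundary of `Ω`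
(in the first-order sense appropriate for a `C¹` boundary). -/
def IsOutwardUnitNormal {n : ℕ} (Ω : Set (EuclideanSpace ℝ (Fin n)))
    (ν : EuclideanSpace ℝ (Fin n) → EuclideanSpace ℝ (Fin n)) : Prop :=
  ContinuousOn ν (frontier Ω) ∧
  ∀ x ∈ frontier Ω, ‖ν x‖ = 1 ∧
    ∀ ε > 0, ∃ δ > 0, ∀ y ∈ closure Ω, dist y x < δ →
      ⟪ν x, y - x⟫ ≤ ε * ‖y - x‖

/-- The lower contact set `Γ_u` of `u` in `Ω`, where `G` is the gradient field of `u`. -/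
def lowerContactSet {n : ℕ} (Ω : Set (EuclideanSpace ℝ (Fin n)))
    (u : EuclideanSpace ℝ (Fin n) → ℝ)
    (G : EuclideanSpace ℝ (Fin n) → EuclideanSpace ℝ (Fin n)) :
    Set (EuclideanSpace ℝ (Fin n)) :=
  {x ∈ Ω | ∀ y ∈ closure Ω, u x + ⟪G x, y - x⟫ ≤ u y}

/-!
Minimize `u - ⟪z, ·⟫` over the compact set `Ω̄`. At an interior minimizer the gradient of `u` is
`z`, and the minimizer lies in the contact set. A boundary minimizer `x₀` is impossible: there
`⟪∇u(x₀) - z, ν(x₀)⟫ ≥ m - ‖z‖ > 0`, so walking from points of `Ω` close to `x₀` in the direction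
`-ν(x₀)` decreases `u - ⟪z, ·⟫` at a uniform rate, and the walk ends strictly below the minimum.
Such walks cannot leave `Ω`: by continuity of `ν`, a boundary point met on the way would be
approached from the side into which its own outward normal points.
-/

open Set Filter Topology InnerProductSpace

lemma IsOpen.mapsTo_Icc_of_frontier_exists_lt_notMem {X : Type*} [TopologicalSpace X] {Ω : Set X}
    (hΩ : IsOpen Ω) {γ : ℝ → X} {a b : ℝ} (hγ : ContinuousOn γ (Icc a b)) (ha : γ a ∈ Ω)
    (hexit : ∀ t ∈ Ioc a b, γ t ∈ frontier Ω → ∃ s ∈ Ico a t, γ s ∉ Ω) :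
    MapsTo γ (Icc a b) Ω := by
  intro t ht
  by_contra htΩ
  have hS : IsClosed (Icc a b ∩ γ ⁻¹' Ωᶜ) :=
    hγ.preimage_isClosed_of_isClosed isClosed_Icc hΩ.isClosed_compl
  have hbdd : BddBelow (Icc a b ∩ γ ⁻¹' Ωᶜ) := ⟨a, fun s hs => hs.1.1⟩
  obtain ⟨t₀, ⟨⟨hat₀, ht₀b⟩, ht₀Ω⟩, hfirst⟩ : ∃ t₀, IsLeast (Icc a b ∩ γ ⁻¹' Ωᶜ) t₀ :=
    ⟨_, hS.csInf_mem ⟨t, ht, htΩ⟩ hbdd, fun s hs => csInf_le hbdd hs⟩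
  have hbefore : ∀ s ∈ Ico a t₀, γ s ∈ Ω := fun s hs => by_contra fun h =>
    (hfirst ⟨⟨hs.1, hs.2.le.trans ht₀b⟩, h⟩).not_gt hs.2
  have hat : a < t₀ := hat₀.lt_of_ne (by rintro rfl; exact ht₀Ω ha)
  have hcl : γ t₀ ∈ closure Ω := by
    have ht₀ : t₀ ∈ closure (Ico a t₀) := by
      rw [closure_Ico hat.ne]; exact right_mem_Icc.2 hat.le
    have hγ₀ : ContinuousWithinAt γ (Ico a t₀) t₀ :=
      (hγ t₀ ⟨hat₀, ht₀b⟩).mono (Ico_subset_Icc_self.trans (Icc_subset_Icc le_rfl ht₀b))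
    exact closure_mono (image_subset_iff.2 hbefore) (hγ₀.mem_closure_image ht₀)
  obtain ⟨s, hs, hsΩ⟩ := hexit t₀ ⟨hat, ht₀b⟩ ⟨hcl, by rwa [hΩ.interior_eq]⟩
  exact hsΩ (hbefore s hs)

section Gradient

variable {E : Type*} [NormedAddCommGroup E] [InnerProductSpace ℝ E] [CompleteSpace E]

lemma HasGradientAt.sub_inner {f : E → ℝ} {g x : E} (hf : HasGradientAt f g x) (z : E) :
    HasGradientAt (fun y => f y - ⟪z, y⟫) (g - z) x := by
  rw [hasGradientAt_iff_hasFDerivAt, map_sub]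
  exact (hasGradientAt_iff_hasFDerivAt.mp hf).sub (innerSL ℝ z).hasFDerivAt

lemma IsLocalMin.hasGradientAt_eq_zero {f : E → ℝ} {g a : E} (h : IsLocalMin f a)
    (hf : HasGradientAt f g a) : g = 0 :=
  (toDual ℝ E).map_eq_zero_iff.mp (h.hasFDerivAt_eq_zero (hasGradientAt_iff_hasFDerivAt.mp hf))

lemma le_add_mul_of_hasGradientAt_of_inner_le {f : E → ℝ} {g : E → E} {y v : E} {T C : ℝ}
    (hT : 0 ≤ T) (hf : ∀ s ∈ Icc 0 T, HasGradientAt f (g (y + s • v)) (y + s • v))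
    (hC : ∀ s ∈ Icc 0 T, ⟪g (y + s • v), v⟫ ≤ C) : f (y + T • v) ≤ f y + C * T := by
  have hderiv : ∀ s ∈ Icc 0 T,
      HasDerivAt (fun t : ℝ => f (y + t • v)) ⟪g (y + s • v), v⟫ s := by
    intro s hs
    have hray : HasDerivAt (fun t : ℝ => y + t • v) v s := by
      simpa using ((hasDerivAt_id s).smul_const v).const_add y
    have h := (hasGradientAt_iff_hasFDerivAt.mp (hf s hs)).comp_hasDerivAt s hray
    rwa [toDual_apply_apply] at h
  have := (convex_Icc 0 T).image_sub_le_mul_sub_of_deriv_le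
    (fun s hs => (hderiv s hs).continuousAt.continuousWithinAt)
    (fun s hs => (hderiv s (interior_subset hs)).differentiableAt.differentiableWithinAt)
    (fun s hs => (hderiv s (interior_subset hs)).deriv ▸ hC s (interior_subset hs))
    0 (left_mem_Icc.2 hT) T (right_mem_Icc.2 hT) hT
  simp only [zero_smul, add_zero, sub_zero] at this
  linarith

end Gradient

lemma dist_sub_smul_le {E : Type*} [SeminormedAddCommGroup E] [NormedSpace ℝ E] {e : E}
    (he : ‖e‖ ≤ 1) (x y : E) {s : ℝ} (hs : 0 ≤ s) : dist (y - s • e) x ≤ dist y x + s := by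
  calc dist (y - s • e) x ≤ dist (y - s • e) y + dist y x := dist_triangle _ _ _
    _ ≤ s + dist y x := by
      rw [dist_eq_norm, sub_sub_cancel_left, norm_neg, norm_smul, Real.norm_of_nonneg hs]
      gcongr
      exact mul_le_of_le_one_right hs he
    _ = dist y x + s := add_comm _ _

namespace IsOutwardUnitNormal

variable {n : ℕ} {Ω : Set (EuclideanSpace ℝ (Fin n))}
  {ν : EuclideanSpace ℝ (Fin n) → EuclideanSpace ℝ (Fin n)}

lemma eventually_add_smul_notMem_closure (hν : IsOutwardUnitNormal Ω ν)
    {q e : EuclideanSpace ℝ (Fin n)} (hq : q ∈ frontier Ω) (he : ‖e‖ ≤ 1)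
    (hqe : 0 < ⟪ν q, e⟫) : ∀ᶠ t in 𝓝[>] (0 : ℝ), q + t • e ∉ closure Ω := by
  obtain ⟨δ, hδ, hcone⟩ := (hν.2 q hq).2 (⟪ν q, e⟫ / 2) (half_pos hqe)
  filter_upwards [Ioo_mem_nhdsGT hδ] with t ⟨ht0, htδ⟩ hmem
  have hnorm : ‖t • e‖ ≤ t := by
    rw [norm_smul, Real.norm_of_nonneg ht0.le]
    exact mul_le_of_le_one_right ht0.le he
  have := hcone _ hmem (by rw [dist_eq_norm, add_sub_cancel_left]; exact hnorm.trans_lt htδ)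
  rw [add_sub_cancel_left, real_inner_smul_right] at this
  nlinarith [mul_le_mul_of_nonneg_left hnorm (half_pos hqe).le, mul_pos ht0 hqe]

lemma exists_sub_smul_mem (hΩ : IsOpen Ω) (hν : IsOutwardUnitNormal Ω ν)
    {x₀ : EuclideanSpace ℝ (Fin n)} (hx₀ : x₀ ∈ frontier Ω) :
    ∃ ρ > 0, ∀ y ∈ Ω, ∀ T, dist y x₀ + T < ρ → ∀ s ∈ Icc 0 T, y - s • ν x₀ ∈ Ω := by
  have hν₀ : ‖ν x₀‖ = 1 := (hν.2 x₀ hx₀).1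
  have hnear : ∀ᶠ q in 𝓝[frontier Ω] x₀, 0 < ⟪ν q, ν x₀⟫ := by
    refine ((hν.1 x₀ hx₀).inner continuousWithinAt_const).eventually (lt_mem_nhds ?_)
    show 0 < ⟪ν x₀, ν x₀⟫
    rw [real_inner_self_eq_norm_sq, hν₀]
    norm_num
  obtain ⟨ρ, hρ, hρnear⟩ := Metric.eventually_nhds_iff.mp (eventually_nhdsWithin_iff.mp hnear)
  refine ⟨ρ, hρ, fun y hy T hT => hΩ.mapsTo_Icc_of_frontier_exists_lt_notMem (by fun_prop)
    (by simpa using hy) ?_⟩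
  rintro t ⟨ht0, htT⟩ hfr
  have hdist : dist (y - t • ν x₀) x₀ < ρ :=
    (dist_sub_smul_le hν₀.le x₀ y ht0.le).trans_lt (by linarith)
  obtain ⟨r, hr_escape, hr0, hrt⟩ := ((hν.eventually_add_smul_notMem_closure hfr hν₀.le
    (hρnear hdist hfr)).and (Ioo_mem_nhdsGT ht0)).exists
  refine ⟨t - r, ⟨by linarith, by linarith⟩, fun hmem => hr_escape ?_⟩
  convert subset_closure hmem using 1
  rw [sub_smul]
  abel

lemma not_isMinOn_of_inner_pos (hΩ : IsOpen Ω) (hν : IsOutwardUnitNormal Ω ν)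
    {f : EuclideanSpace ℝ (Fin n) → ℝ} {g : EuclideanSpace ℝ (Fin n) → EuclideanSpace ℝ (Fin n)}
    (hf : ContinuousOn f (closure Ω)) (hfg : ∀ x ∈ Ω, HasGradientAt f (g x) x)
    (hg : ContinuousOn g (closure Ω)) {x₀ : EuclideanSpace ℝ (Fin n)} (hx₀ : x₀ ∈ frontier Ω)
    (hpos : 0 < ⟪g x₀, ν x₀⟫) : ¬IsMinOn f (closure Ω) x₀ := by
  intro hmin
  set κ := ⟪g x₀, ν x₀⟫
  have hν₀ : ‖ν x₀‖ = 1 := (hν.2 x₀ hx₀).1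
  have hx₀cl : x₀ ∈ closure Ω := frontier_subset_closure hx₀
  have hslope : ∀ᶠ w in 𝓝[closure Ω] x₀, κ / 2 < ⟪g w, ν x₀⟫ :=
    ((hg x₀ hx₀cl).inner continuousWithinAt_const).eventually (lt_mem_nhds (half_lt_self hpos))
  obtain ⟨ρ₁, hρ₁, hρ₁slope⟩ :=
    Metric.eventually_nhds_iff.mp (eventually_nhdsWithin_iff.mp hslope)
  obtain ⟨ρ₂, hρ₂, hρ₂ray⟩ := hν.exists_sub_smul_mem hΩ hx₀
  obtain ⟨T, hT, hTρ₁, hTρ₂⟩ : ∃ T > 0, 4 * T ≤ ρ₁ ∧ 4 * T ≤ ρ₂ :=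
    ⟨min ρ₁ ρ₂ / 4, by positivity, by linarith [min_le_left ρ₁ ρ₂],
      by linarith [min_le_right ρ₁ ρ₂]⟩
  have hdescent : ∀ y ∈ Ω, dist y x₀ < 2 * T →
      y - T • ν x₀ ∈ Ω ∧ f (y - T • ν x₀) ≤ f y + -(κ / 2) * T := by
    intro y hy hyx₀
    have hray : ∀ s ∈ Icc 0 T, y + s • -ν x₀ ∈ Ω ∧ dist (y + s • -ν x₀) x₀ < ρ₁ := by
      intro s hs
      rw [smul_neg, ← sub_eq_add_neg]
      refine ⟨hρ₂ray y hy T (by linarith) s hs,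
        (dist_sub_smul_le hν₀.le x₀ y hs.1).trans_lt (by linarith [hs.2])⟩
    have hdecr := le_add_mul_of_hasGradientAt_of_inner_le (f := f) (g := g) hT.le
      (fun s hs => hfg _ (hray s hs).1) fun s hs => by
        rw [inner_neg_right, neg_le_neg_iff]
        exact (hρ₁slope (hray s hs).2 (subset_closure (hray s hs).1)).le
    rw [smul_neg, ← sub_eq_add_neg] at hdecr
    exact ⟨hρ₂ray y hy T (by linarith) T (right_mem_Icc.2 hT.le), hdecr⟩
  obtain ⟨y, ⟨hy, hyx₀⟩, hfy⟩ : ∃ y, (y ∈ Ω ∧ dist y x₀ < 2 * T) ∧ f y < f x₀ + κ / 2 * T := by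
    have : (𝓝[Ω] x₀).NeBot := mem_closure_iff_nhdsWithin_neBot.mp hx₀cl
    have hfx : ∀ᶠ y in 𝓝[Ω] x₀, f y < f x₀ + κ / 2 * T :=
      ((hf x₀ hx₀cl).mono subset_closure).eventually
        (gt_mem_nhds (lt_add_of_pos_right _ (by positivity)))
    exact ((eventually_mem_nhdsWithin.and
      (nhdsWithin_le_nhds (ball_mem_nhds x₀ (by positivity)))).and hfx).exists
  obtain ⟨hyT, hfyT⟩ := hdescent y hy hyx₀
  linarith [(hmin (subset_closure hyT)).out]

end IsOutwardUnitNormal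

lemma mem_lowerContactSet_of_isMinOn {n : ℕ} {Ω : Set (EuclideanSpace ℝ (Fin n))}
    (hΩ : IsOpen Ω) {u : EuclideanSpace ℝ (Fin n) → ℝ}
    {G : EuclideanSpace ℝ (Fin n) → EuclideanSpace ℝ (Fin n)} {z x₀ : EuclideanSpace ℝ (Fin n)}
    (hx₀ : x₀ ∈ Ω) (hG : HasGradientAt u (G x₀) x₀)
    (hmin : IsMinOn (fun y => u y - ⟪z, y⟫) (closure Ω) x₀) :
    x₀ ∈ lowerContactSet Ω u G ∧ G x₀ = z := by
  have hGz : G x₀ = z := sub_eq_zero.mp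
    ((hmin.isLocalMin (mem_of_superset (hΩ.mem_nhds hx₀) subset_closure)).hasGradientAt_eq_zero
      (hG.sub_inner z))
  refine ⟨⟨hx₀, fun y hy => ?_⟩, hGz⟩
  have : u x₀ - ⟪z, x₀⟫ ≤ u y - ⟪z, y⟫ := hmin hy
  rw [hGz, inner_sub_right]
  linarith

theorem stmt0_general {n : ℕ}
    (Ω : Set (EuclideanSpace ℝ (Fin n))) (hΩo : IsOpen Ω)
    (hΩb : Bornology.IsBounded Ω) (hΩne : Ω.Nonempty)
    (ν : EuclideanSpace ℝ (Fin n) → EuclideanSpace ℝ (Fin n))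
    (hν : IsOutwardUnitNormal Ω ν)
    (u : EuclideanSpace ℝ (Fin n) → ℝ)
    (G : EuclideanSpace ℝ (Fin n) → EuclideanSpace ℝ (Fin n))
    -- `u ∈ C¹(Ω̄)` : `u` is continuous on `Ω̄`, differentiable in `Ω` with gradient `G`,
    -- and `G` is continuous up to the boundary
    (hu : ContinuousOn u (closure Ω))
    (hG : ∀ x ∈ Ω, HasGradientAt u (G x) x)
    (hGc : ContinuousOn G (closure Ω))
    -- `∂u/∂ν > 0` on `∂Ω`
    (hpos : ∀ x ∈ frontier Ω, 0 < ⟪G x, ν x⟫)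
    (m : ℝ) (hm : m = sInf ((fun x => ⟪G x, ν x⟫) '' frontier Ω)) :
    Metric.ball (0 : EuclideanSpace ℝ (Fin n)) m ⊆ G '' lowerContactSet Ω u G := by
  intro z hz
  rw [mem_ball_zero_iff] at hz
  have hfc : ContinuousOn (fun y => u y - ⟪z, y⟫) (closure Ω) := by fun_prop
  obtain ⟨x₀, hx₀cl, hmin⟩ := hΩb.isCompact_closure.exists_isMinOn hΩne.closure hfc
  by_cases hx₀ : x₀ ∈ Ω
  · exact ⟨x₀, mem_lowerContactSet_of_isMinOn hΩo hx₀ (hG x₀ hx₀) hmin⟩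
  have hx₀fr : x₀ ∈ frontier Ω := ⟨hx₀cl, by rwa [hΩo.interior_eq]⟩
  have hm_le : m ≤ ⟪G x₀, ν x₀⟫ :=
    hm ▸ csInf_le ⟨0, by rintro _ ⟨x, hx, rfl⟩; exact (hpos x hx).le⟩ ⟨x₀, hx₀fr, rfl⟩
  have hz_le : ⟪z, ν x₀⟫ ≤ ‖z‖ := by
    simpa [(hν.2 x₀ hx₀fr).1] using real_inner_le_norm z (ν x₀)
  refine absurd hmin (hν.not_isMinOn_of_inner_pos hΩo hfc (fun x hx => (hG x hx).sub_inner z)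
    (hGc.sub continuousOn_const) hx₀fr ?_)
  rw [inner_sub_left]
  linarith

theorem stmt0 {n : ℕ} (hn : 0 < n)
    (Ω : Set (EuclideanSpace ℝ (Fin n))) (hΩo : IsOpen Ω)
    (hΩb : Bornology.IsBounded Ω) (hΩne : Ω.Nonempty)
    (ν : EuclideanSpace ℝ (Fin n) → EuclideanSpace ℝ (Fin n))
    (hν : IsOutwardUnitNormal Ω ν)
    (u : EuclideanSpace ℝ (Fin n) → ℝ)
    (G : EuclideanSpace ℝ (Fin n) → EuclideanSpace ℝ (Fin n))
    -- `u ∈ C¹(Ω̄)` : `u` is continuous on `Ω̄`, differentiable in `Ω` with gradient `G`,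
    -- and `G` is continuous up to the boundary
    (hu : ContinuousOn u (closure Ω))
    (hG : ∀ x ∈ Ω, HasGradientAt u (G x) x)
    (hGc : ContinuousOn G (closure Ω))
    -- `∂u/∂ν > 0` on `∂Ω`
    (hpos : ∀ x ∈ frontier Ω, 0 < ⟪G x, ν x⟫)
    (m : ℝ) (hm : m = sInf ((fun x => ⟪G x, ν x⟫) '' frontier Ω)) (hm0 : 0 < m) :
    Metric.ball (0 : EuclideanSpace ℝ (Fin n)) m ⊆ G '' lowerContactSet Ω u G :=
  stmt0_general Ω hΩo hΩb hΩne ν hν u G hu hG hGc hpos m hm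
end
end

section
/- Let Ω ⊂ ℝⁿ be a bounded open domain with C¹ boundary, and let u : Ω̄ → ℝ be C¹ on Ω̄ with ∂u/∂ν < 0 at every point of ∂Ω. Set m := inf_{∂Ω} |∂u/∂ν| and assume m > 0. Then the open ball B_m(0) of radius m centered at the origin is contained in ∇u(Γ^u), i.e. for every z ∈ ℝⁿ with |z| < m there exists y ∈ Γ^u with ∇u(y) = z. -/
open MeasureTheory Metric
open scoped RealInnerProductSpace

noncomputable section

/-- The upper contact set `Γ^u` of `u` in `Ω`, where `G` is the gradient field of `u`. -/
def upperContactSet {n : ℕ} (Ω : Set (EuclideanSpace ℝ (Fin n)))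
    (u : EuclideanSpace ℝ (Fin n) → ℝ)
    (G : EuclideanSpace ℝ (Fin n) → EuclideanSpace ℝ (Fin n)) :
    Set (EuclideanSpace ℝ (Fin n)) :=
  {x ∈ Ω | ∀ y ∈ closure Ω, u y ≤ u x + ⟪G x, y - x⟫}

/-!
Put `v x := u x - ⟪z, x⟫`, which attains its maximum over the compact set `Ω̄` at some `x₀`.
If `x₀ ∈ Ω`, then `∇v(x₀) = 0`, i.e. `∇u(x₀) = z`, and `v ≤ v(x₀)` on `Ω̄` says exactly that
`x₀ ∈ Γ^u`. A boundary maximum is impossible: `|z| < m` makes `⟪∇v(x₀), ν(x₀)⟫ < 0`, so `v`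
grows at a definite rate along `-ν(x₀)` near `x₀`. The normal condition is only one-sided, so
one cannot move inward from `x₀` itself; instead move along `-ν(x₀)` from an interior point `ω`
close to `x₀` with `v(ω)` close to `v(x₀)`. If this ray left `Ω` near `x₀`, at the exit point `w`
the segment back towards `ω` would lie in `Ω` in the direction `ν(x₀) ≈ ν(w)`, contradicting the
normal condition at `w`. So the ray stays in `Ω` for a fixed length, and `v` ends up above `v(x₀)`.
-/

open Set Filter Topology

theorem ContinuousOn.exists_first_mem_frontier {X : Type*} [TopologicalSpace X] {U : Set X}
    (hU : IsOpen U) {γ : ℝ → X} {T : ℝ} (hγ : ContinuousOn γ (Icc 0 T)) (h0 : γ 0 ∈ U)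
    (hT : ∃ t ∈ Icc 0 T, γ t ∉ U) :
    ∃ τ ∈ Ioc 0 T, γ τ ∈ frontier U ∧ ∀ t ∈ Ico 0 τ, γ t ∈ U := by
  set S := Icc 0 T ∩ γ ⁻¹' Uᶜ
  have hSne : S.Nonempty := hT
  have hSbdd : BddBelow S := ⟨0, fun t ht => ht.1.1⟩
  have hτS : sInf S ∈ S :=
    (hγ.preimage_isClosed_of_isClosed isClosed_Icc hU.isClosed_compl).csInf_mem hSne hSbdd
  have hbefore : ∀ t ∈ Ico 0 (sInf S), γ t ∈ U := fun t ht => by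
    by_contra hout
    exact (csInf_le hSbdd ⟨⟨ht.1, ht.2.le.trans hτS.1.2⟩, hout⟩).not_gt ht.2
  have hτpos : 0 < sInf S := lt_of_le_of_ne hτS.1.1 fun h => hτS.2 (h ▸ h0)
  refine ⟨sInf S, ⟨hτpos, hτS.1.2⟩, ?_, hbefore⟩
  rw [hU.frontier_eq]
  have hτcl : sInf S ∈ closure (Ico 0 (sInf S)) := by
    rw [closure_Ico hτpos.ne]
    exact right_mem_Icc.2 hτpos.le
  have hγτ : ContinuousWithinAt γ (Ico 0 (sInf S)) (sInf S) :=
    (hγ _ hτS.1).mono (Ico_subset_Icc_self.trans (Icc_subset_Icc_right hτS.1.2))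
  exact ⟨hγτ.mem_closure hτcl hbefore, hτS.2⟩

section InnerProductSpace

variable {E : Type*} [NormedAddCommGroup E] [InnerProductSpace ℝ E]

theorem inner_le_zero_of_eventually_add_smul_mem {Ω : Set E} {w ν a : E}
    (hν : ∀ ε > 0, ∃ δ > 0, ∀ y ∈ closure Ω, dist y w < δ → ⟪ν, y - w⟫ ≤ ε * ‖y - w‖)
    (ha : ∀ᶠ t in 𝓝[>] (0 : ℝ), w + t • a ∈ closure Ω) : ⟪ν, a⟫ ≤ 0 := by
  by_contra! hpos
  obtain ⟨δ, hδ, hνδ⟩ := hν (⟪ν, a⟫ / (‖a‖ + 1)) (by positivity)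
  have hnear : ∀ᶠ t in 𝓝[>] (0 : ℝ), dist (w + t • a) w < δ := by
    have : Tendsto (fun t : ℝ => w + t • a) (𝓝 0) (𝓝 w) := by
      simpa using ((continuous_id.smul continuous_const).const_add w).tendsto (0 : ℝ)
    exact (this.mono_left nhdsWithin_le_nhds).eventually (Metric.ball_mem_nhds w hδ)
  obtain ⟨t, ⟨hmem, hdist⟩, ht⟩ := ((ha.and hnear).and self_mem_nhdsWithin).exists
  have hnormal := hνδ _ hmem hdist
  rw [add_sub_cancel_left, inner_smul_right, norm_smul, Real.norm_of_nonneg ht.le] at hnormal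
  have hle : ⟪ν, a⟫ ≤ ⟪ν, a⟫ / (‖a‖ + 1) * ‖a‖ := le_of_mul_le_mul_left (by linarith) ht
  have hlt : ⟪ν, a⟫ / (‖a‖ + 1) * ‖a‖ < ⟪ν, a⟫ := by
    rw [div_mul_eq_mul_div, div_lt_iff₀ (by positivity)]
    nlinarith
  linarith

theorem IsLocalMax.hasGradientAt_eq_zero [CompleteSpace E] {f : E → ℝ} {x g : E}
    (hmax : IsLocalMax f x) (hf : HasGradientAt f g x) : g = 0 :=
  (InnerProductSpace.toDual ℝ E).map_eq_zero_iff.1 (hmax.hasFDerivAt_eq_zero hf.hasFDerivAt)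

theorem HasGradientAt.sub_inner_const [CompleteSpace E] {f : E → ℝ} {x g : E}
    (hf : HasGradientAt f g x) (z : E) : HasGradientAt (fun y => f y - ⟪z, y⟫) (g - z) x := by
  rw [hasGradientAt_iff_hasFDerivAt, map_sub]
  exact hf.hasFDerivAt.sub (InnerProductSpace.toDual ℝ E z).hasFDerivAt

theorem add_mul_le_of_le_inner_gradient [CompleteSpace E] {f : E → ℝ} {g : E → E} {x a : E}
    {D κ : ℝ} (hD : 0 ≤ D) (hf : ∀ t ∈ Icc 0 D, HasGradientAt f (g (x + t • a)) (x + t • a))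
    (hκ : ∀ t ∈ Icc 0 D, κ ≤ ⟪g (x + t • a), a⟫) : f x + κ * D ≤ f (x + D • a) := by
  have hderiv : ∀ t ∈ Icc 0 D, HasDerivAt (fun s : ℝ => f (x + s • a)) ⟪g (x + t • a), a⟫ t := by
    intro t ht
    have hline : HasDerivAt (fun s : ℝ => x + s • a) a t := by
      simpa using ((hasDerivAt_id t).smul_const a).const_add x
    simpa [Function.comp_def] using (hf t ht).hasFDerivAt.comp_hasDerivAt t hline
  have := (convex_Icc (0 : ℝ) D).mul_sub_le_image_sub_of_le_deriv
    (fun t ht => (hderiv t ht).continuousAt.continuousWithinAt)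
    (fun t ht => (hderiv t (interior_subset ht)).differentiableAt.differentiableWithinAt)
    (fun t ht => (hderiv t (interior_subset ht)).deriv ▸ hκ t (interior_subset ht))
    0 (left_mem_Icc.2 hD) D (right_mem_Icc.2 hD) hD
  simp only [zero_smul, add_zero, sub_zero] at this
  linarith

theorem add_smul_mem_of_inner_normal_neg {Ω : Set E} (hΩ : IsOpen Ω) {ν : E → E}
    (hν : ∀ w ∈ frontier Ω, ∀ ε > 0, ∃ δ > 0, ∀ y ∈ closure Ω, dist y w < δ →
      ⟪ν w, y - w⟫ ≤ ε * ‖y - w‖)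
    {x₀ d : E} {ρ : ℝ} (hd : ∀ w ∈ frontier Ω, dist w x₀ < ρ → ⟪ν w, d⟫ < 0)
    {ω : E} (hω : ω ∈ Ω) {D : ℝ} (hD : dist ω x₀ + D * ‖d‖ < ρ) :
    ∀ t ∈ Icc 0 D, ω + t • d ∈ Ω := by
  by_contra! hout
  obtain ⟨τ, hτ, hτF, hbefore⟩ := ContinuousOn.exists_first_mem_frontier hΩ
    (γ := fun t => ω + t • d) (by fun_prop) (by simpa using hω) hout
  have hnear : dist (ω + τ • d) x₀ < ρ := calc
    dist (ω + τ • d) x₀ ≤ dist (ω + τ • d) ω + dist ω x₀ := dist_triangle _ _ _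
    _ = τ * ‖d‖ + dist ω x₀ := by
      rw [dist_eq_norm, add_sub_cancel_left, norm_smul, Real.norm_of_nonneg hτ.1.le]
    _ ≤ D * ‖d‖ + dist ω x₀ := by gcongr; exact hτ.2
    _ < ρ := by linarith
  have hback : ∀ᶠ s in 𝓝[>] (0 : ℝ), ω + τ • d + s • (-d) ∈ closure Ω := by
    filter_upwards [Ioo_mem_nhdsGT hτ.1] with s hs
    convert subset_closure (hbefore (τ - s) ⟨by linarith [hs.2], by linarith [hs.1]⟩) using 1
    module
  have hinner := inner_le_zero_of_eventually_add_smul_mem (hν _ hτF) hback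
  rw [inner_neg_right] at hinner
  linarith [hd _ hτF hnear]

end InnerProductSpace

theorem not_isMaxOn_of_inner_gradient_normal_neg {n : ℕ} {Ω : Set (EuclideanSpace ℝ (Fin n))}
    (hΩ : IsOpen Ω) {ν : EuclideanSpace ℝ (Fin n) → EuclideanSpace ℝ (Fin n)}
    (hν : IsOutwardUnitNormal Ω ν) {v : EuclideanSpace ℝ (Fin n) → ℝ}
    {g : EuclideanSpace ℝ (Fin n) → EuclideanSpace ℝ (Fin n)} (hv : ContinuousOn v (closure Ω))
    (hg : ∀ x ∈ Ω, HasGradientAt v (g x) x) (hgc : ContinuousOn g (closure Ω))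
    {x₀ : EuclideanSpace ℝ (Fin n)} (hx₀ : x₀ ∈ frontier Ω) (hneg : ⟪g x₀, ν x₀⟫ < 0) :
    ¬ IsMaxOn v (closure Ω) x₀ := by
  intro hmax
  set d := -ν x₀
  have hd : ‖d‖ = 1 := by rw [norm_neg, (hν.2 x₀ hx₀).1]
  set κ := ⟪g x₀, d⟫
  have hκ : 0 < κ := by simp only [κ, d, inner_neg_right]; linarith
  have hx₀cl : x₀ ∈ closure Ω := frontier_subset_closure hx₀
  obtain ⟨ρ, hρ, hνρ⟩ : ∃ ρ > 0, ∀ w ∈ frontier Ω, dist w x₀ < ρ → ⟪ν w, d⟫ < 0 := by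
    have hcont : ContinuousWithinAt (fun w => ⟪ν w, d⟫) (frontier Ω) x₀ :=
      (hν.1 x₀ hx₀).inner continuousWithinAt_const
    have hval : ⟪ν x₀, d⟫ < 0 := by
      rw [inner_neg_right, real_inner_self_eq_norm_sq, (hν.2 x₀ hx₀).1]; norm_num
    obtain ⟨ρ, hρ, hball⟩ := Metric.mem_nhdsWithin_iff.1 (hcont (Iio_mem_nhds hval))
    exact ⟨ρ, hρ, fun w hw hwx => hball ⟨hwx, hw⟩⟩
  obtain ⟨r, hr, hgr⟩ : ∃ r > 0, ∀ p ∈ closure Ω, dist p x₀ < r → κ / 2 < ⟪g p, d⟫ := by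
    have hcont : ContinuousWithinAt (fun p => ⟪g p, d⟫) (closure Ω) x₀ :=
      (hgc x₀ hx₀cl).inner continuousWithinAt_const
    obtain ⟨r, hr, hball⟩ :=
      Metric.mem_nhdsWithin_iff.1 (hcont (Ioi_mem_nhds (half_lt_self hκ)))
    exact ⟨r, hr, fun p hp hpx => hball ⟨hpx, hp⟩⟩
  obtain ⟨D, hD, hDρ, hDr⟩ : ∃ D > 0, 2 * D ≤ ρ ∧ 2 * D ≤ r :=
    ⟨min ρ r / 2, by positivity, by linarith [min_le_left ρ r], by linarith [min_le_right ρ r]⟩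
  obtain ⟨ω, ⟨hωΩ, hωx₀⟩, hωv⟩ : ∃ ω, (ω ∈ Ω ∧ dist ω x₀ < D) ∧ v x₀ - κ / 2 * D < v ω := by
    have := mem_closure_iff_nhdsWithin_neBot.1 hx₀cl
    have hvΩ := (hv x₀ hx₀cl).mono subset_closure
    have hball : ∀ᶠ y in 𝓝[Ω] x₀, dist y x₀ < D :=
      mem_nhdsWithin_of_mem_nhds (Metric.ball_mem_nhds x₀ hD)
    exact ((eventually_mem_nhdsWithin.and hball).and
      (hvΩ.eventually (Ioi_mem_nhds (by nlinarith)))).exists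
  have hray : ∀ t ∈ Icc 0 D, ω + t • d ∈ Ω :=
    add_smul_mem_of_inner_normal_neg hΩ (fun w hw => (hν.2 w hw).2) hνρ hωΩ
      (by rw [hd, mul_one]; linarith)
  have hgrow : v ω + κ / 2 * D ≤ v (ω + D • d) := by
    refine add_mul_le_of_le_inner_gradient hD.le (fun t ht => hg _ (hray t ht)) fun t ht => ?_
    refine (hgr _ (subset_closure (hray t ht)) ?_).le
    calc dist (ω + t • d) x₀ ≤ dist (ω + t • d) ω + dist ω x₀ := dist_triangle _ _ _
      _ = t + dist ω x₀ := by
        rw [dist_eq_norm, add_sub_cancel_left, norm_smul, hd, mul_one, Real.norm_of_nonneg ht.1]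
      _ < r := by linarith [ht.2]
  linarith [isMaxOn_iff.1 hmax _ (subset_closure (hray D (right_mem_Icc.2 hD.le)))]

theorem stmt1_general {n : ℕ}
    (Ω : Set (EuclideanSpace ℝ (Fin n))) (hΩo : IsOpen Ω)
    (hΩb : Bornology.IsBounded Ω) (hΩne : Ω.Nonempty)
    (ν : EuclideanSpace ℝ (Fin n) → EuclideanSpace ℝ (Fin n))
    (hν : IsOutwardUnitNormal Ω ν)
    (u : EuclideanSpace ℝ (Fin n) → ℝ)
    (G : EuclideanSpace ℝ (Fin n) → EuclideanSpace ℝ (Fin n))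
    -- `u ∈ C¹(Ω̄)` : `u` is continuous on `Ω̄`, differentiable in `Ω` with gradient `G`,
    -- and `G` is continuous up to the boundary
    (hu : ContinuousOn u (closure Ω))
    (hG : ∀ x ∈ Ω, HasGradientAt u (G x) x)
    (hGc : ContinuousOn G (closure Ω))
    -- `∂u/∂ν < 0` on `∂Ω`
    (hneg : ∀ x ∈ frontier Ω, ⟪G x, ν x⟫ < 0)
    (m : ℝ) (hm : m = sInf ((fun x => |⟪G x, ν x⟫|) '' frontier Ω)) :
    Metric.ball (0 : EuclideanSpace ℝ (Fin n)) m ⊆ G '' upperContactSet Ω u G := by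
  intro z hz
  rw [mem_ball_zero_iff] at hz
  have hv : ContinuousOn (fun x => u x - ⟪z, x⟫) (closure Ω) := by fun_prop
  obtain ⟨x₀, hx₀cl, hmax⟩ := hΩb.isCompact_closure.exists_isMaxOn hΩne.closure hv
  have hx₀ : x₀ ∈ Ω := by
    by_contra hx₀
    have hx₀F : x₀ ∈ frontier Ω := hΩo.frontier_eq ▸ ⟨hx₀cl, hx₀⟩
    refine not_isMaxOn_of_inner_gradient_normal_neg hΩo hν hv
      (fun x hx => (hG x hx).sub_inner_const z) (hGc.sub continuousOn_const) hx₀F ?_ hmax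
    have hmG : m ≤ -⟪G x₀, ν x₀⟫ := by
      rw [hm, ← abs_of_neg (hneg x₀ hx₀F)]
      exact csInf_le ⟨0, fun _ ⟨_, _, h⟩ => h ▸ abs_nonneg _⟩ ⟨x₀, hx₀F, rfl⟩
    have hzν : -⟪z, ν x₀⟫ ≤ ‖z‖ := by
      simpa [(hν.2 x₀ hx₀F).1] using
        neg_le.1 <| neg_le_of_abs_le (abs_real_inner_le_norm z (ν x₀))
    rw [inner_sub_left]
    linarith
  have hloc : IsLocalMax (fun x => u x - ⟪z, x⟫) x₀ :=
    hmax.isLocalMax (mem_of_superset (hΩo.mem_nhds hx₀) subset_closure)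
  have hGz : G x₀ = z := sub_eq_zero.1 (hloc.hasGradientAt_eq_zero ((hG x₀ hx₀).sub_inner_const z))
  refine ⟨x₀, ⟨hx₀, fun y hy => ?_⟩, hGz⟩
  have := isMaxOn_iff.1 hmax y hy
  rw [hGz, inner_sub_right]
  linarith

theorem stmt1 {n : ℕ} (hn : 0 < n)
    (Ω : Set (EuclideanSpace ℝ (Fin n))) (hΩo : IsOpen Ω)
    (hΩb : Bornology.IsBounded Ω) (hΩne : Ω.Nonempty)
    (ν : EuclideanSpace ℝ (Fin n) → EuclideanSpace ℝ (Fin n))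
    (hν : IsOutwardUnitNormal Ω ν)
    (u : EuclideanSpace ℝ (Fin n) → ℝ)
    (G : EuclideanSpace ℝ (Fin n) → EuclideanSpace ℝ (Fin n))
    -- `u ∈ C¹(Ω̄)` : `u` is continuous on `Ω̄`, differentiable in `Ω` with gradient `G`,
    -- and `G` is continuous up to the boundary
    (hu : ContinuousOn u (closure Ω))
    (hG : ∀ x ∈ Ω, HasGradientAt u (G x) x)
    (hGc : ContinuousOn G (closure Ω))
    -- `∂u/∂ν < 0` on `∂Ω`
    (hneg : ∀ x ∈ frontier Ω, ⟪G x, ν x⟫ < 0)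
    (m : ℝ) (hm : m = sInf ((fun x => |⟪G x, ν x⟫|) '' frontier Ω)) (hm0 : 0 < m) :
    Metric.ball (0 : EuclideanSpace ℝ (Fin n)) m ⊆ G '' upperContactSet Ω u G :=
  stmt1_general Ω hΩo hΩb hΩne ν hν u G hu hG hGc hneg m hm
end
end

section
/- Let Ω ⊂ ℝⁿ be a bounded open domain with C¹ boundary and let u ∈ C²(Ω) ∩ C¹(Ω̄), u not identically zero, be a solution of the Monge–Ampère eigenvalue problem det(∇²u) = λ|u|ⁿ in Ω with u = 0 on ∂Ω, where λ > 0. Then λ ≥ |B₁| ( inf_{∂Ω} |∇u| / ‖u‖_{L^n(Ω)} )ⁿ. -/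
open MeasureTheory Metric
open scoped RealInnerProductSpace

noncomputable section

/-- The Hessian matrix `∇²u(x)` of `u : ℝⁿ → ℝ` at `x`. -/
def hessianMatrix {n : ℕ} (u : EuclideanSpace ℝ (Fin n) → ℝ)
    (x : EuclideanSpace ℝ (Fin n)) : Matrix (Fin n) (Fin n) ℝ :=
  Matrix.of fun i j =>
    iteratedFDeriv ℝ 2 u x ![EuclideanSpace.single i 1, EuclideanSpace.single j 1]


/-!
Alexandrov's argument. For `‖p‖ < m := inf_{∂Ω} |∇u|`, `p ≠ 0`, maximise `|u| + ⟪p, ·⟫` over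
`Ω̄`. A maximiser on `∂Ω` would be a contact point of `|u|` with an affine function of slope
`‖p‖ < |∇u|` there, which is impossible; so it is an interior point where `u ≠ 0`, and there
`∇u = ∓p` according to the sign of `u`. Hence the gradient image of `{u < 0}` together with the
reflected gradient image of `{u > 0}` covers the punctured ball `B_m(0) \ {0}`, and the area
formula gives `|B₁| mⁿ ≤ ∫_Ω |det ∇²u| = λ ∫_Ω |u|ⁿ`.
-/

open Set Filter Topology

theorem exists_Ico_subset_of_isOpen {U : Set ℝ} (hU : IsOpen U) (h0 : 0 ∈ U) {T : ℝ}
    (hT : 0 < T) : ∃ b ∈ Ioc 0 T, Ico 0 b ⊆ U ∧ (b < T → b ∉ U) := by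
  by_cases hS : (Icc 0 T \ U).Nonempty
  · have hbdd : BddBelow (Icc 0 T \ U) := ⟨0, fun s hs => hs.1.1⟩
    have hb := (isClosed_Icc.sdiff hU).csInf_mem hS hbdd
    refine ⟨_, ⟨hb.1.1.lt_of_ne ?_, hb.1.2⟩, fun s hs => ?_, fun _ => hb.2⟩
    · rintro h
      exact hb.2 (h ▸ h0)
    · by_contra hsU
      exact (csInf_le hbdd ⟨⟨hs.1, hs.2.le.trans hb.1.2⟩, hsU⟩).not_gt hs.2
  · refine ⟨T, ⟨hT, le_rfl⟩, fun s hs => ?_, fun h => absurd h (lt_irrefl T)⟩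
    by_contra hsU
    exact hS ⟨s, ⟨hs.1, hs.2.le⟩, hsU⟩

theorem exists_Ioo_subset_of_isOpen {U : Set ℝ} (hU : IsOpen U) (h0 : 0 ∈ U) {T : ℝ}
    (hT : 0 < T) : ∃ a b, -T ≤ a ∧ a < 0 ∧ 0 < b ∧ b ≤ T ∧ Ioo a b ⊆ U ∧
      (-T < a → a ∉ U) ∧ (b < T → b ∉ U) := by
  obtain ⟨b, ⟨hb0, hbT⟩, hbU, hb⟩ := exists_Ico_subset_of_isOpen hU h0 hT
  obtain ⟨a, ⟨ha0, haT⟩, haU, ha⟩ :=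
    exists_Ico_subset_of_isOpen (hU.preimage continuous_neg) (by simpa using h0) hT
  refine ⟨-a, b, by linarith, by linarith, hb0, hbT, fun h hh => ?_,
    fun h => ha (by linarith), hb⟩
  rcases le_or_gt 0 h with h0 | h0
  · exact hbU ⟨h0, hh.2⟩
  · simpa using haU (show -h ∈ Ico 0 a from ⟨by linarith, by linarith [hh.1]⟩)

theorem exists_segment_of_isOpen {V : Type*} [AddCommGroup V] [Module ℝ V] [TopologicalSpace V]
    [IsTopologicalAddGroup V] [ContinuousSMul ℝ V] {Ω : Set V} (hΩ : IsOpen Ω) {w : V}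
    (hw : w ∈ Ω) (d : V) {T : ℝ} (hT : 0 < T) :
    ∃ a b, -T ≤ a ∧ a < 0 ∧ 0 < b ∧ b ≤ T ∧ (∀ h ∈ Ioo a b, w + h • d ∈ Ω) ∧
      (∀ h ∈ Icc a b, w + h • d ∈ closure Ω) ∧
      (-T < a → w + a • d ∈ frontier Ω) ∧ (b < T → w + b • d ∈ frontier Ω) := by
  have hline : Continuous fun h : ℝ => w + h • d := by fun_prop
  obtain ⟨a, b, haT, ha, hb, hbT, hseg, ha_fr, hb_fr⟩ :=
    exists_Ioo_subset_of_isOpen (hΩ.preimage hline) (by simpa using hw) hT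
  have hcl : ∀ h ∈ Icc a b, w + h • d ∈ closure Ω := by
    rw [← closure_Ioo (ha.trans hb).ne]
    exact (closure_mono hseg).trans (hline.closure_preimage_subset Ω)
  refine ⟨a, b, haT, ha, hb, hbT, hseg, hcl, fun h => ?_, fun h => ?_⟩
  · exact hΩ.frontier_eq ▸ ⟨hcl a (left_mem_Icc.2 (ha.trans hb).le), ha_fr h⟩
  · exact hΩ.frontier_eq ▸ ⟨hcl b (right_mem_Icc.2 (ha.trans hb).le), hb_fr h⟩

section InnerProductSpace

variable {F : Type*} [NormedAddCommGroup F] [InnerProductSpace ℝ F] [CompleteSpace F]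

def hessianCLM (u : F → ℝ) (x : F) : F →L[ℝ] F :=
  (InnerProductSpace.toDual ℝ F).symm.toContinuousLinearEquiv.toContinuousLinearMap.comp
    (fderiv ℝ (fderiv ℝ u) x)

theorem hasFDerivAt_hessianCLM {u : F → ℝ} {G : F → F} {x : F} (hu : ContDiffAt ℝ 2 u x)
    (hG : ∀ᶠ y in 𝓝 x, HasGradientAt u (G y) y) : HasFDerivAt G (hessianCLM u x) x := by
  have hdu : DifferentiableAt ℝ (fderiv ℝ u) x :=
    (hu.fderiv_right (m := 1) (by norm_num)).differentiableAt one_ne_zero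
  refine (((InnerProductSpace.toDual ℝ F).symm.toContinuousLinearEquiv.toContinuousLinearMap
    ).hasFDerivAt.comp x hdu.hasFDerivAt).congr_of_eventuallyEq ?_
  filter_upwards [hG] with y hy
  simp [hy.hasFDerivAt.fderiv]

theorem HasGradientAt.eq_neg_of_isLocalMax_add_inner {f : F → ℝ} {g p y : F}
    (hf : HasGradientAt f g y) (hmax : IsLocalMax (fun x => f x + ⟪p, x⟫) y) : g = -p := by
  have h := hmax.hasFDerivAt_eq_zero (hf.hasFDerivAt.add (innerSL ℝ p).hasFDerivAt)
  refine ext_inner_right ℝ fun v => ?_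
  have hv := congr($h v)
  simp only [add_apply, InnerProductSpace.toDual_apply_apply, innerSL_apply_apply,
    zero_apply] at hv
  rw [inner_neg_left]
  linarith

theorem mul_sub_le_sub_of_le_inner_gradient {Ω : Set F} {u : F → ℝ} {G : F → F}
    (hu : ContinuousOn u (closure Ω)) (hG : ∀ x ∈ Ω, HasGradientAt u (G x) x) {w d : F}
    {a b μ : ℝ} (hab : a ≤ b) (hseg : ∀ h ∈ Ioo a b, w + h • d ∈ Ω)
    (hcl : ∀ h ∈ Icc a b, w + h • d ∈ closure Ω)
    (hμ : ∀ h ∈ Ioo a b, μ ≤ ⟪G (w + h • d), d⟫) :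
    μ * (b - a) ≤ u (w + b • d) - u (w + a • d) := by
  have hderiv (h : ℝ) (hh : h ∈ Ioo a b) :
      HasDerivAt (fun h : ℝ => u (w + h • d)) ⟪G (w + h • d), d⟫ h := by
    simpa [Function.comp_def] using (hG _ (hseg h hh)).hasFDerivAt.comp_hasDerivAt h
      (((hasDerivAt_id h).smul_const d).const_add w)
  refine (convex_Icc a b).mul_sub_le_image_sub_of_le_deriv
    (hu.comp (by fun_prop) hcl) ?_ ?_ a (left_mem_Icc.2 hab) b (right_mem_Icc.2 hab) hab
  all_goals rw [interior_Icc]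
  · exact fun h hh => (hderiv h hh).differentiableAt.differentiableWithinAt
  · exact fun h hh => (hderiv h hh).deriv ▸ hμ h hh

/- If `‖G x₀‖ > μ > ‖p‖`, then `u` grows at rate `≥ μ` along the direction of `G x₀` near `x₀`.
On a chord of `Ω` through a point `w` close to `x₀` in that direction, this contradicts `u = 0`
at the ends if both ends lie on `∂Ω`, and the bound `|u| ≤ ⟪p, x₀ - ·⟫` if the chord is long. -/
theorem norm_le_of_abs_le_inner_sub {Ω : Set F} (hΩo : IsOpen Ω) {u : F → ℝ} {G : F → F}
    (hu : ContinuousOn u (closure Ω)) (hG : ∀ x ∈ Ω, HasGradientAt u (G x) x)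
    (hbd : ∀ x ∈ frontier Ω, u x = 0) {x₀ p : F} (hx₀ : x₀ ∈ closure Ω)
    (hGc : ContinuousWithinAt G Ω x₀) (hcontact : ∀ y ∈ closure Ω, |u y| ≤ ⟪p, x₀ - y⟫) :
    ‖G x₀‖ ≤ ‖p‖ := by
  by_contra! hlt
  obtain ⟨μ, hpμ, hμG⟩ := exists_between hlt
  have hq : G x₀ ≠ 0 := norm_pos_iff.1 ((norm_nonneg p).trans_lt hlt)
  set d := ‖G x₀‖⁻¹ • G x₀
  have hd : ‖d‖ = 1 := norm_smul_inv_norm hq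
  have hqd : ⟪G x₀, d⟫ = ‖G x₀‖ := by
    rw [real_inner_smul_right, real_inner_self_eq_norm_sq]
    field_simp
  obtain ⟨ρ, hρ, hgrow⟩ : ∃ ρ > 0, ∀ y ∈ Ω, dist y x₀ < ρ → μ ≤ ⟪G y, d⟫ := by
    have hlim : Tendsto (fun y => ⟪G y, d⟫) (𝓝[Ω] x₀) (𝓝 ‖G x₀‖) :=
      hqd ▸ hGc.inner continuousWithinAt_const
    obtain ⟨ρ, hρ, h⟩ := Metric.mem_nhdsWithin_iff.1 (hlim.eventually_const_lt hμG)
    exact ⟨ρ, hρ, fun y hy hyx => (h ⟨hyx, hy⟩).le⟩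
  obtain ⟨w, hwΩ, hw⟩ :
      ∃ w ∈ Ω, dist x₀ w < min (ρ / 2) ((μ - ‖p‖) * ρ / (4 * (‖p‖ + 1))) :=
    Metric.mem_closure_iff.1 hx₀ _ (lt_min (half_pos hρ) (by have := sub_pos.2 hpμ; positivity))
  obtain ⟨a, b, haT, ha, hb, hbT, hseg, hcl, ha_fr, hb_fr⟩ :=
    exists_segment_of_isOpen hΩo hwΩ d (half_pos hρ)
  have hdist (h : ℝ) : dist (w + h • d) x₀ ≤ |h| + dist x₀ w := by
    calc dist (w + h • d) x₀ ≤ dist (w + h • d) w + dist w x₀ := dist_triangle _ _ _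
      _ = |h| + dist x₀ w := by
        rw [dist_self_add_left, norm_smul, hd, mul_one, Real.norm_eq_abs, dist_comm]
  have hchord := mul_sub_le_sub_of_le_inner_gradient hu hG (ha.trans hb).le hseg hcl
    fun h hh => hgrow _ (hseg h hh) <| (hdist h).trans_lt <| by
      have := hw.trans_le (min_le_left _ _)
      have : |h| < ρ / 2 := abs_lt.2 ⟨by linarith [hh.1], by linarith [hh.2]⟩
      linarith
  by_cases hexit : -(ρ / 2) < a ∧ b < ρ / 2
  · rw [hbd _ (hb_fr hexit.2), hbd _ (ha_fr hexit.1), sub_zero] at hchord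
    nlinarith [norm_nonneg p]
  have hlong : ρ / 2 ≤ b - a := by
    rw [not_and_or, not_lt, not_lt] at hexit
    rcases hexit with h | h <;> linarith
  have hend (h : ℝ) (hh : h ∈ Icc a b) : |u (w + h • d)| ≤ ‖p‖ * (|h| + dist x₀ w) :=
    calc |u (w + h • d)| ≤ ⟪p, x₀ - (w + h • d)⟫ := hcontact _ (hcl h hh)
      _ ≤ ‖p‖ * ‖x₀ - (w + h • d)‖ := real_inner_le_norm _ _
      _ ≤ ‖p‖ * (|h| + dist x₀ w) := by
        rw [← dist_eq_norm, dist_comm]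
        exact mul_le_mul_of_nonneg_left (hdist h) (norm_nonneg p)
  have ha' := (abs_le.1 (hend a ⟨le_rfl, (ha.trans hb).le⟩)).1
  have hb' := (abs_le.1 (hend b ⟨(ha.trans hb).le, le_rfl⟩)).2
  rw [abs_of_neg ha] at ha'
  rw [abs_of_pos hb] at hb'
  have hw' := hw.trans_le (min_le_right _ _)
  rw [lt_div_iff₀ (by positivity)] at hw'
  linarith [mul_le_mul_of_nonneg_left hlong (sub_pos.2 hpμ).le, dist_nonneg (x := x₀) (y := w)]

theorem mem_image_gradient_of_norm_lt [ProperSpace F] {Ω : Set F} (hΩo : IsOpen Ω)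
    (hΩb : Bornology.IsBounded Ω) (hΩne : Ω.Nonempty) {u : F → ℝ} {G : F → F}
    (hu : ContinuousOn u (closure Ω)) (hG : ∀ x ∈ Ω, HasGradientAt u (G x) x)
    (hGc : ContinuousOn G (closure Ω)) (hbd : ∀ x ∈ frontier Ω, u x = 0) {p : F}
    (hp : p ≠ 0) (hpG : ∀ x ∈ frontier Ω, ‖p‖ < ‖G x‖) :
    p ∈ G '' {x ∈ Ω | u x < 0} ∪ -(G '' {x ∈ Ω | 0 < u x}) := by
  obtain ⟨y₀, hy₀, hmax⟩ := hΩb.isCompact_closure.exists_isMaxOn hΩne.closure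
    (hu.abs.add (continuous_const.inner continuous_id).continuousOn)
  have hle : ∀ y ∈ closure Ω, |u y| + ⟪p, y⟫ ≤ |u y₀| + ⟪p, y₀⟫ := hmax
  by_cases hy₀Ω : y₀ ∈ Ω
  · have hgrad (σ : ℝ) (hσ : |σ| ≤ 1) (hσu : σ * u y₀ = |u y₀|) : σ • G y₀ = -p := by
      refine HasGradientAt.eq_neg_of_isLocalMax_add_inner (f := fun x => σ * u x) ?_
        (Filter.eventually_of_mem (hΩo.mem_nhds hy₀Ω) fun y hy => ?_)
      · simpa [hasGradientAt_iff_hasFDerivAt] using (hG y₀ hy₀Ω).hasFDerivAt.const_mul σ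
      · have := hle y (subset_closure hy)
        have : σ * u y ≤ |u y| := (le_abs_self _).trans (by
          rw [abs_mul]; exact mul_le_of_le_one_left (abs_nonneg _) hσ)
        simp only
        linarith
    rcases lt_trichotomy (u y₀) 0 with hneg | hzero | hpos
    · left
      refine ⟨y₀, ⟨hy₀Ω, hneg⟩, ?_⟩
      simpa using hgrad (-1) (by simp) (by rw [abs_of_neg hneg]; ring)
    · exact absurd (by simpa using hgrad 0 (by simp) (by simp [hzero])) hp
    · right
      refine ⟨y₀, ⟨hy₀Ω, hpos⟩, ?_⟩
      simpa using hgrad 1 (by simp) (by rw [abs_of_pos hpos]; ring)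
  · have hy₀fr : y₀ ∈ frontier Ω := hΩo.frontier_eq ▸ ⟨hy₀, hy₀Ω⟩
    have hcontact (y : F) (hy : y ∈ closure Ω) : |u y| ≤ ⟪p, y₀ - y⟫ := by
      have := hle y hy
      rw [hbd y₀ hy₀fr, abs_zero] at this
      rw [inner_sub_right]
      linarith
    exact absurd (norm_le_of_abs_le_inner_sub hΩo hu hG hbd hy₀
      ((hGc y₀ hy₀).mono subset_closure) hcontact) (hpG y₀ hy₀fr).not_ge

end InnerProductSpace

section EuclideanSpace

variable {n : ℕ}

local notation "E" => EuclideanSpace ℝ (Fin n)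

theorem det_hessianCLM (u : E → ℝ) (x : E) :
    (hessianCLM u x).det = (hessianMatrix u x).det := by
  let b := (EuclideanSpace.basisFun (Fin n) ℝ).toBasis
  have hcoord (ℓ : StrongDual ℝ E) (i : Fin n) :
      (InnerProductSpace.toDual ℝ _).symm ℓ i = ℓ (EuclideanSpace.single i 1) := by
    rw [← InnerProductSpace.toDual_symm_apply, EuclideanSpace.inner_single_right, one_mul,
      conj_trivial]
  have hM : LinearMap.toMatrix b b (hessianCLM u x : _ →ₗ[ℝ] _) =
      (hessianMatrix u x).transpose := by
    ext i j
    simp [b, LinearMap.toMatrix_apply, hessianCLM, hessianMatrix, iteratedFDeriv_two_apply, hcoord]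
  rw [ContinuousLinearMap.det, ← LinearMap.det_toMatrix b, hM, Matrix.det_transpose]

theorem volume_image_gradient_le {s : Set E} (hs : IsOpen s) {u : E → ℝ} {G : E → E}
    (hu : ContDiffOn ℝ 2 u s) (hG : ∀ x ∈ s, HasGradientAt u (G x) x) :
    volume (G '' s) ≤ ∫⁻ x in s, ENNReal.ofReal |(hessianMatrix u x).det| := by
  simp_rw [← det_hessianCLM]
  refine addHaar_image_le_lintegral_abs_det_fderiv volume hs.measurableSet fun x hx =>
    (hasFDerivAt_hessianCLM ((hu x hx).contDiffAt (hs.mem_nhds hx)) ?_).hasFDerivWithinAt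
  filter_upwards [hs.mem_nhds hx] using hG

theorem volume_ball_le_lintegral_abs_det_hessianMatrix [NeZero n] {Ω : Set E}
    (hΩo : IsOpen Ω) (hΩb : Bornology.IsBounded Ω) (hΩne : Ω.Nonempty)
    {u : E → ℝ} {G : E → E}
    (hu2 : ContDiffOn ℝ 2 u Ω) (hu : ContinuousOn u (closure Ω))
    (hG : ∀ x ∈ Ω, HasGradientAt u (G x) x) (hGc : ContinuousOn G (closure Ω))
    (hbd : ∀ x ∈ frontier Ω, u x = 0) :
    volume (ball (0 : E) (sInf ((fun x => ‖G x‖) '' frontier Ω))) ≤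
      ∫⁻ x in Ω, ENNReal.ofReal |(hessianMatrix u x).det| := by
  set m := sInf ((fun x => ‖G x‖) '' frontier Ω)
  set Ωneg := {x ∈ Ω | u x < 0}
  set Ωpos := {x ∈ Ω | 0 < u x}
  have hneg : IsOpen Ωneg := (hu.mono subset_closure).isOpen_inter_preimage hΩo isOpen_Iio
  have hpos : IsOpen Ωpos := (hu.mono subset_closure).isOpen_inter_preimage hΩo isOpen_Ioi
  have hcover : ball (0 : E) m \ {0} ⊆ G '' Ωneg ∪ -(G '' Ωpos) := fun p ⟨hp, hp0⟩ =>
    mem_image_gradient_of_norm_lt hΩo hΩb hΩne hu hG hGc hbd hp0 fun x hx =>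
      (mem_ball_zero_iff.1 hp).trans_le
        (csInf_le ⟨0, by rintro _ ⟨y, -, rfl⟩; exact norm_nonneg _⟩ ⟨x, hx, rfl⟩)
  have himage {s : Set E} (hs : IsOpen s) (hsΩ : s ⊆ Ω) :=
    volume_image_gradient_le hs (hu2.mono hsΩ) fun x hx => hG x (hsΩ hx)
  calc volume (ball (0 : E) m) = volume (ball (0 : E) m \ {0}) :=
        (measure_sdiff_null (measure_singleton 0)).symm
    _ ≤ volume (G '' Ωneg) + volume (G '' Ωpos) := by
        rw [← Measure.measure_neg (μ := volume) (G '' Ωpos)]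
        exact (measure_mono hcover).trans (measure_union_le _ _)
    _ ≤ (∫⁻ x in Ωneg, ENNReal.ofReal |(hessianMatrix u x).det|) +
          ∫⁻ x in Ωpos, ENNReal.ofReal |(hessianMatrix u x).det| :=
        add_le_add (himage hneg (sep_subset _ _)) (himage hpos (sep_subset _ _))
    _ = ∫⁻ x in Ωneg ∪ Ωpos, ENNReal.ofReal |(hessianMatrix u x).det| :=
        (lintegral_union hpos.measurableSet
          (disjoint_left.2 fun x hx hx' => hx.2.not_gt hx'.2)).symm
    _ ≤ ∫⁻ x in Ω, ENNReal.ofReal |(hessianMatrix u x).det| :=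
        lintegral_mono_set (union_subset (sep_subset _ _) (sep_subset _ _))

end EuclideanSpace

theorem stmt16_general {n : ℕ} (hn : 0 < n)
    (Ω : Set (EuclideanSpace ℝ (Fin n))) (hΩo : IsOpen Ω)
    (hΩb : Bornology.IsBounded Ω) (hΩne : Ω.Nonempty)
    (u : EuclideanSpace ℝ (Fin n) → ℝ)
    (G : EuclideanSpace ℝ (Fin n) → EuclideanSpace ℝ (Fin n))
    -- `u ∈ C²(Ω) ∩ C¹(Ω̄)`
    (hu2 : ContDiffOn ℝ 2 u Ω)
    (hu : ContinuousOn u (closure Ω))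
    (hG : ∀ x ∈ Ω, HasGradientAt u (G x) x)
    (hGc : ContinuousOn G (closure Ω))
    -- `det(∇²u) = λ |u|ⁿ` in `Ω`, `λ > 0`
    (lam : ℝ) (hlam : 0 < lam)
    (heq : ∀ x ∈ Ω, (hessianMatrix u x).det = lam * |u x| ^ (n : ℕ))
    -- `u = 0` on `∂Ω`
    (hbd : ∀ x ∈ frontier Ω, u x = 0) :
    lam ≥ (volume (Metric.ball (0 : EuclideanSpace ℝ (Fin n)) 1)).toReal *
      (sInf ((fun x => ‖G x‖) '' frontier Ω) /
        (∫ x in Ω, |u x| ^ (n : ℝ)) ^ ((n : ℝ)⁻¹)) ^ (n : ℕ) := by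
  have : NeZero n := ⟨hn.ne'⟩
  set m := sInf ((fun x => ‖G x‖) '' frontier Ω)
  set J := ∫ x in Ω, |u x| ^ (n : ℝ)
  have hm : 0 ≤ m := Real.sInf_nonneg (by rintro _ ⟨x, -, rfl⟩; exact norm_nonneg _)
  have hJ : 0 ≤ J := setIntegral_nonneg hΩo.measurableSet fun x _ => by positivity
  have hint : IntegrableOn (fun x => lam * |u x| ^ (n : ℝ)) Ω :=
    ((continuousOn_const.mul (hu.abs.rpow_const fun _ _ => Or.inr (Nat.cast_nonneg n))
      ).integrableOn_compact hΩb.isCompact_closure).mono_set subset_closure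
  have hball : volume (ball (0 : EuclideanSpace ℝ (Fin n)) m) ≤ ENNReal.ofReal (lam * J) :=
    calc volume (ball 0 m) ≤ ∫⁻ x in Ω, ENNReal.ofReal |(hessianMatrix u x).det| :=
          volume_ball_le_lintegral_abs_det_hessianMatrix hΩo hΩb hΩne hu2 hu hG hGc hbd
      _ = ∫⁻ x in Ω, ENNReal.ofReal (lam * |u x| ^ (n : ℝ)) :=
          setLIntegral_congr_fun hΩo.measurableSet fun x hx => by
            rw [heq x hx, Real.rpow_natCast, abs_of_nonneg (by positivity)]
      _ = ENNReal.ofReal (lam * J) := by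
          rw [← integral_const_mul, ofReal_integral_eq_lintegral_ofReal hint
            (ae_of_all _ fun x => by positivity)]
  rw [Measure.addHaar_ball volume 0 hm, finrank_euclideanSpace_fin,
    ← ENNReal.ofReal_toReal measure_ball_lt_top.ne, ← ENNReal.ofReal_mul (by positivity),
    ENNReal.ofReal_le_ofReal_iff (by positivity)] at hball
  rw [ge_iff_le, div_pow, Real.rpow_inv_natCast_pow hJ hn.ne', mul_div_assoc']
  exact div_le_of_le_mul₀ hJ hlam.le (by linarith)

theorem stmt16 {n : ℕ} (hn : 0 < n)
    (Ω : Set (EuclideanSpace ℝ (Fin n))) (hΩo : IsOpen Ω)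
    (hΩb : Bornology.IsBounded Ω) (hΩne : Ω.Nonempty)
    (ν : EuclideanSpace ℝ (Fin n) → EuclideanSpace ℝ (Fin n))
    (hν : IsOutwardUnitNormal Ω ν)
    (u : EuclideanSpace ℝ (Fin n) → ℝ)
    (G : EuclideanSpace ℝ (Fin n) → EuclideanSpace ℝ (Fin n))
    -- `u ∈ C²(Ω) ∩ C¹(Ω̄)`
    (hu2 : ContDiffOn ℝ 2 u Ω)
    (hu : ContinuousOn u (closure Ω))
    (hG : ∀ x ∈ Ω, HasGradientAt u (G x) x)
    (hGc : ContinuousOn G (closure Ω))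
    -- `u` not identically zero
    (hune : ∃ x ∈ Ω, u x ≠ 0)
    -- `det(∇²u) = λ |u|ⁿ` in `Ω`, `λ > 0`
    (lam : ℝ) (hlam : 0 < lam)
    (heq : ∀ x ∈ Ω, (hessianMatrix u x).det = lam * |u x| ^ (n : ℕ))
    -- `u = 0` on `∂Ω`
    (hbd : ∀ x ∈ frontier Ω, u x = 0) :
    lam ≥ (volume (Metric.ball (0 : EuclideanSpace ℝ (Fin n)) 1)).toReal *
      (sInf ((fun x => ‖G x‖) '' frontier Ω) /
        (∫ x in Ω, |u x| ^ (n : ℝ)) ^ ((n : ℝ)⁻¹)) ^ (n : ℕ) :=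
  stmt16_general hn Ω hΩo hΩb hΩne u G hu2 hu hG hGc lam hlam heq hbd
end
end
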